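/- There is an absolute constant c > 0 such that in the herald-protocol round model, for every vertex u, every integer k ≥ 1, every channel i ∈ {1,…,n_A}, and every subset S ⊆ N^k(u) partitioned as S = S^n ⊔ S^b ⊔ S^l, the following holds: conditioned on the event that no vertex of S^n operates on channel i, every vertex of S^b broadcasts on channel i, and every vertex of S^l listens on channel i (assuming this conditioning event has positive probability), the probability that some vertex of N^k(u) receives a message on some channel j ∈ {1,…,n_A} with j ≠ i is at most c · π_ℓ · α(G[N^k(u)]). -/
import Mathlib


open Finset

/-- The action a vertex takes in one round: `none` is idle, `some (i, false)` is listening on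
channel `i+1`, and `some (i, true)` is broadcasting on channel `i+1` (channels are numbered
`1, …, nA`). -/
abbrev Act (nA : ℕ) := Option (Fin nA × Bool)

/-- The probability of each action in the herald-protocol round model, for a vertex with
activity `g` and listening probability `p`: on channel `i+1` the vertex listens with
probability `p·g·2^{-(i+1)}` and broadcasts with probability `(1−p)·g·2^{-(i+1)}`; with the
remaining probability it is idle. -/
noncomputable def actProb (nA : ℕ) (p g : ℝ) : Act nA → ℝ
  | some (i, false) => p * g * (2 : ℝ) ^ (-((i.1 : ℤ) + 1))
  | some (i, true) => (1 - p) * g * (2 : ℝ) ^ (-((i.1 : ℤ) + 1))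
  | none => 1 - ∑ i : Fin nA, g * (2 : ℝ) ^ (-((i.1 : ℤ) + 1))

open Classical in
/-- The probability of an event `E` in one round of the herald-protocol round model, where all
vertices choose their actions independently. -/
noncomputable def roundPr {V : Type*} [Fintype V] [DecidableEq V] (nA : ℕ) (p : ℝ)
    (γ : V → ℝ) (E : (V → Act nA) → Prop) : ℝ :=
  ∑ f : V → Act nA, if E f then ∏ v, actProb nA p (γ v) (f v) else 0

/-- `v` listens on channel `i` (i.e. channel number `i+1`). -/
def listens {V : Type*} {nA : ℕ} (f : V → Act nA) (v : V) (i : Fin nA) : Prop :=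
  f v = some (i, false)

/-- `v` broadcasts on channel `i` (i.e. channel number `i+1`). -/
def broadcasts {V : Type*} {nA : ℕ} (f : V → Act nA) (v : V) (i : Fin nA) : Prop :=
  f v = some (i, true)

/-- `v` operates (listens or broadcasts) on channel `i`. -/
def operates {V : Type*} {nA : ℕ} (f : V → Act nA) (v : V) (i : Fin nA) : Prop :=
  listens f v i ∨ broadcasts f v i

open Classical in
/-- `v` receives a message on channel `i`: it listens on channel `i` and exactly one of its
neighbors broadcasts on channel `i`. -/
def receivesOn {V : Type*} [Fintype V] [DecidableEq V] (G : SimpleGraph V)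
    [DecidableRel G.Adj] {nA : ℕ} (f : V → Act nA) (v : V) (i : Fin nA) : Prop :=
  listens f v i ∧ ((G.neighborFinset v).filter fun w => broadcasts f w i).card = 1

/-- `v` receives a message (on some channel). -/
def receives {V : Type*} [Fintype V] [DecidableEq V] (G : SimpleGraph V)
    [DecidableRel G.Adj] {nA : ℕ} (f : V → Act nA) (v : V) : Prop :=
  ∃ i : Fin nA, receivesOn G f v i

/-- `ball G u k` is the set `N^k(u)` of vertices at distance at most `k` from `u` in `G`
(including `u` itself). -/
def ball {V : Type*} (G : SimpleGraph V) (u : V) (k : ℕ) : Set V :=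
  {v | ∃ p : G.Walk u v, p.length ≤ k}

/-- The independence number of the subgraph of `G` induced by a vertex set `S`. -/
noncomputable def indepNumOn {V : Type*} [Fintype V] (G : SimpleGraph V) (S : Set V) : ℕ :=
  sSup {n | ∃ s : Finset V, ↑s ⊆ S ∧ (∀ a ∈ s, ∀ b ∈ s, a ≠ b → ¬ G.Adj a b) ∧ s.card = n}

/-- `Γ(x) = ∑_{y ∈ N(x) ∪ {x}} γ(y)`. -/
noncomputable def Gam {V : Type*} [Fintype V] [DecidableEq V] (G : SimpleGraph V)
    [DecidableRel G.Adj] (γ : V → ℝ) (x : V) : ℝ :=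
  ∑ y ∈ insert x (G.neighborFinset x), γ y

/-- `Γ°(x) = ∑_{y ∈ N(x)} γ(y)`. -/
noncomputable def GamO {V : Type*} [Fintype V] [DecidableEq V] (G : SimpleGraph V)
    [DecidableRel G.Adj] (γ : V → ℝ) (x : V) : ℝ :=
  ∑ y ∈ G.neighborFinset x, γ y


-- ### Auxiliary lemmas ###


lemma cube_le_exp {u : ℝ} (hu : 0 ≤ u) : u^3 ≤ 6 * Real.exp u := by
  have := Real.pow_div_factorial_le_exp u hu 3
  norm_num [Nat.factorial] at this
  linarith

lemma sq_le_exp {u : ℝ} (hu : 0 ≤ u) : u^2 ≤ 2 * Real.exp u := by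
  have := Real.pow_div_factorial_le_exp u hu 2
  norm_num [Nat.factorial] at this
  linarith

lemma lin_le_exp {u : ℝ} (hu : 0 ≤ u) : u ≤ Real.exp u := by
  have := Real.add_one_le_exp u; linarith

lemma geoAux : ∀ n : ℕ, ∀ u : ℝ, 0 ≤ u →
    ∑ j ∈ Finset.range n, (u * (2:ℝ)⁻¹ ^ j)^2 * Real.exp (-(u * (2:ℝ)⁻¹ ^ j))
      ≤ 18 * u / (1 + u) := by
  intro n
  induction n with
  | zero => intro u hu; simp; positivity
  | succ n ih =>
    intro u hu
    rw [Finset.sum_range_succ']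
    have hstep : ∀ j : ℕ, (u * (2:ℝ)⁻¹ ^ (j+1))^2 * Real.exp (-(u * (2:ℝ)⁻¹ ^ (j+1)))
        = (u/2 * (2:ℝ)⁻¹ ^ j)^2 * Real.exp (-(u/2 * (2:ℝ)⁻¹ ^ j)) := by
      intro j; ring_nf
    simp only [hstep]
    have h1 : ∑ j ∈ Finset.range n, (u/2 * (2:ℝ)⁻¹ ^ j)^2 * Real.exp (-(u/2 * (2:ℝ)⁻¹ ^ j))
        ≤ 18 * (u/2) / (1 + u/2) := ih (u/2) (by linarith)
    have h2 : 18 * (u/2) / (1 + u/2) = 18 * u / (2 + u) := by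
      rw [div_eq_div_iff] <;> [ring; linarith; linarith]
    have hE := Real.exp_pos u
    have key : (u * (2:ℝ)⁻¹ ^ 0)^2 * Real.exp (-(u * (2:ℝ)⁻¹ ^ 0))
        ≤ 18 * u / (1 + u) - 18 * u / (2 + u) := by
      have hd1 : (0:ℝ) < 1 + u := by linarith
      have hd2 : (0:ℝ) < 2 + u := by linarith
      have hrhs : 18 * u / (1 + u) - 18 * u / (2 + u) = 18 * u / ((1+u)*(2+u)) := by
        field_simp; ring
      rw [hrhs]
      simp only [pow_zero, mul_one]
      rw [le_div_iff₀ (by positivity)]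
      have goal2 : u^2*((1+u)*(2+u)) ≤ 18*u*Real.exp u := by
        have a3 := mul_le_mul_of_nonneg_left (cube_le_exp hu) hu
        have a2 := mul_le_mul_of_nonneg_left (sq_le_exp hu) hu
        have a1 := mul_le_mul_of_nonneg_left (lin_le_exp hu) hu
        nlinarith [mul_nonneg hu hE.le]
      calc u^2 * Real.exp (-u) * ((1+u)*(2+u))
          = (u^2*((1+u)*(2+u))) * Real.exp (-u) := by ring
        _ ≤ (18*u*Real.exp u) * Real.exp (-u) :=
            mul_le_mul_of_nonneg_right goal2 (Real.exp_pos _).le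
        _ = 18*u := by rw [mul_assoc, ← Real.exp_add]; simp
    linarith

lemma geo2 (n : ℕ) (s : ℝ) (hs : 0 ≤ s) :
    ∑ j ∈ Finset.range n, ((2:ℝ)⁻¹^(j+1))^2 * s * Real.exp (-(s * (2:ℝ)⁻¹^(j+2)))
      ≤ 72/(1+s) := by
  rcases eq_or_lt_of_le hs with h | h
  · subst h; simp
  · have hterm : ∀ j : ℕ, ((2:ℝ)⁻¹^(j+1))^2 * s * Real.exp (-(s * (2:ℝ)⁻¹^(j+2)))
        = (4/s) * ((s/4 * (2:ℝ)⁻¹ ^ j)^2 * Real.exp (-(s/4 * (2:ℝ)⁻¹ ^ j))) := by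
      intro j
      have : s * (2:ℝ)⁻¹^(j+2) = s/4 * (2:ℝ)⁻¹ ^ j := by ring
      rw [this]
      field_simp
      ring
    simp only [hterm, ← Finset.mul_sum]
    have := geoAux n (s/4) (by linarith)
    have h4 : (0:ℝ) < 4/s := by positivity
    calc (4/s) * ∑ j ∈ Finset.range n, (s/4 * (2:ℝ)⁻¹ ^ j)^2 * Real.exp (-(s/4 * (2:ℝ)⁻¹ ^ j))
        ≤ (4/s) * (18 * (s/4) / (1 + s/4)) := by
          apply mul_le_mul_of_nonneg_left this h4.le
      _ = 72 / (4 + s) := by field_simp; ring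
      _ ≤ 72 / (1 + s) := by
          apply div_le_div_of_nonneg_left (by norm_num) (by linarith) (by linarith)


lemma caroWei {V : Type} [Fintype V] [DecidableEq V] (G : SimpleGraph V) [DecidableRel G.Adj]
    (w : V → ℝ) (hw : ∀ x, 0 ≤ w x) :
    ∀ n : ℕ, ∀ T : Finset V, T.card ≤ n →
    ∃ s : Finset V, s ⊆ T ∧ (∀ a ∈ s, ∀ b ∈ s, a ≠ b → ¬ G.Adj a b) ∧
      ∑ x ∈ T, w x / (w x + ∑ y ∈ G.neighborFinset x ∩ T, w y) ≤ (s.card : ℝ) := by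
  intro n
  induction n with
  | zero =>
    intro T hT
    have : T = ∅ := Finset.card_eq_zero.mp (Nat.le_zero.mp hT)
    subst this
    exact ⟨∅, Finset.Subset.refl _, by simp, by simp⟩
  | succ n ih =>
    intro T hT
    by_cases hall : ∀ x ∈ T, w x = 0
    · refine ⟨∅, Finset.empty_subset _, by simp, ?_⟩
      have : ∑ x ∈ T, w x / (w x + ∑ y ∈ G.neighborFinset x ∩ T, w y) = 0 :=
        Finset.sum_eq_zero fun x hx => by rw [hall x hx, zero_div]
      simp [this]
    · push_neg at hall
      obtain ⟨z, hzT, hzw⟩ := hall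
      set key : V → ℝ := fun y => w y + ∑ u ∈ G.neighborFinset y ∩ T, w u with hkey
      have hPne : (T.filter (fun y => 0 < w y)).Nonempty :=
        ⟨z, Finset.mem_filter.mpr ⟨hzT, lt_of_le_of_ne (hw z) (Ne.symm hzw)⟩⟩
      obtain ⟨x₀, hx₀P, hmin⟩ := Finset.exists_min_image _ key hPne
      obtain ⟨hx₀T, hx₀w⟩ := Finset.mem_filter.mp hx₀P
      set D : Finset V := insert x₀ (G.neighborFinset x₀ ∩ T) with hD
      have hx₀nb : x₀ ∉ G.neighborFinset x₀ ∩ T := by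
        simp [SimpleGraph.mem_neighborFinset]
      have hDT : D ⊆ T := by
        intro y hy
        rcases Finset.mem_insert.mp hy with rfl | hy
        · exact hx₀T
        · exact (Finset.mem_inter.mp hy).2
      set T' : Finset V := T \ D with hT'
      have hx₀D : x₀ ∈ D := Finset.mem_insert_self _ _
      have hx₀T' : x₀ ∉ T' := fun h => (Finset.mem_sdiff.mp h).2 hx₀D
      have hT'T : T' ⊆ T := Finset.sdiff_subset
      have hcard : T'.card ≤ n := by
        have hss : T' ⊂ T := Finset.ssubset_iff_of_subset hT'T |>.mpr ⟨x₀, hx₀T, hx₀T'⟩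
        have := Finset.card_lt_card hss
        omega
      obtain ⟨s', hs'T', hs'ind, hs'sum⟩ := ih T' hcard
      have hx₀s' : x₀ ∉ s' := fun h => hx₀T' (hs'T' h)
      refine ⟨insert x₀ s', ?_, ?_, ?_⟩
      · intro y hy
        rcases Finset.mem_insert.mp hy with rfl | hy
        · exact hx₀T
        · exact hT'T (hs'T' hy)
      · intro a ha b hb hab
        have hnadj : ∀ b ∈ s', ¬ G.Adj x₀ b := by
          intro b hb hadj
          have hbT' := hs'T' hb
          have hbT := hT'T hbT'
          have : b ∈ D := Finset.mem_insert.mpr (Or.inr (Finset.mem_inter.mpr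
            ⟨(SimpleGraph.mem_neighborFinset _ _ _).mpr hadj, hbT⟩))
          exact (Finset.mem_sdiff.mp hbT').2 this
        rcases Finset.mem_insert.mp ha with ha0 | ha
        · rcases Finset.mem_insert.mp hb with hb0 | hb
          · exact absurd (ha0.trans hb0.symm) hab
          · exact ha0 ▸ hnadj b hb
        · rcases Finset.mem_insert.mp hb with hb0 | hb
          · exact fun hadj => hnadj a ha (hb0 ▸ hadj.symm)
          · exact hs'ind a ha b hb hab
      · -- the sum bound
        have hsplit : ∑ x ∈ T, w x / (w x + ∑ y ∈ G.neighborFinset x ∩ T, w y)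
            = (∑ x ∈ T', w x / (w x + ∑ y ∈ G.neighborFinset x ∩ T, w y))
              + ∑ x ∈ D, w x / (w x + ∑ y ∈ G.neighborFinset x ∩ T, w y) := by
          rw [Finset.sum_sdiff hDT]
        have hWD : ∑ y ∈ D, w y = key x₀ := by
          rw [hD, Finset.sum_insert hx₀nb]
        have hWDpos : 0 < ∑ y ∈ D, w y := by
          have := Finset.single_le_sum (f := w) (fun y _ => hw y) hx₀D
          linarith
        have hDbound : ∑ x ∈ D, w x / (w x + ∑ y ∈ G.neighborFinset x ∩ T, w y) ≤ 1 := by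
          have hterm : ∀ x ∈ D, w x / (w x + ∑ y ∈ G.neighborFinset x ∩ T, w y)
              ≤ w x / (∑ y ∈ D, w y) := by
            intro x hxD
            rcases eq_or_lt_of_le (hw x) with h0 | h0
            · rw [← h0, zero_div, zero_div]
            · have hxP : x ∈ T.filter (fun y => 0 < w y) :=
                Finset.mem_filter.mpr ⟨hDT hxD, h0⟩
              have hge : (∑ y ∈ D, w y) ≤ key x := hWD ▸ hmin x hxP
              exact div_le_div_of_nonneg_left (hw x) hWDpos hge
          calc ∑ x ∈ D, w x / (w x + ∑ y ∈ G.neighborFinset x ∩ T, w y)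
              ≤ ∑ x ∈ D, w x / (∑ y ∈ D, w y) := Finset.sum_le_sum hterm
            _ = (∑ x ∈ D, w x) / (∑ y ∈ D, w y) := by rw [Finset.sum_div]
            _ = 1 := div_self (ne_of_gt hWDpos)
        have hT'bound : ∑ x ∈ T', w x / (w x + ∑ y ∈ G.neighborFinset x ∩ T, w y)
            ≤ ∑ x ∈ T', w x / (w x + ∑ y ∈ G.neighborFinset x ∩ T', w y) := by
          apply Finset.sum_le_sum
          intro x hx
          rcases eq_or_lt_of_le (hw x) with h0 | h0
          · rw [← h0, zero_div, zero_div]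
          · have hsub : G.neighborFinset x ∩ T' ⊆ G.neighborFinset x ∩ T :=
              Finset.inter_subset_inter (Finset.Subset.refl _) hT'T
            have hle : ∑ y ∈ G.neighborFinset x ∩ T', w y
                ≤ ∑ y ∈ G.neighborFinset x ∩ T, w y :=
              Finset.sum_le_sum_of_subset_of_nonneg hsub (fun y _ _ => hw y)
            have hpos : 0 < w x + ∑ y ∈ G.neighborFinset x ∩ T', w y := by
              have : 0 ≤ ∑ y ∈ G.neighborFinset x ∩ T', w y :=
                Finset.sum_nonneg (fun y _ => hw y)
              linarith
            exact div_le_div_of_nonneg_left (hw x) hpos (by linarith)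
        have hcardeq : ((insert x₀ s').card : ℝ) = (s'.card : ℝ) + 1 := by
          rw [Finset.card_insert_of_notMem hx₀s']
          push_cast
          ring
        rw [hsplit, hcardeq]
        linarith

lemma tpow_eq (j : ℕ) : (2:ℝ) ^ (-((j : ℤ) + 1)) = (2:ℝ)⁻¹ ^ (j+1) := by
  rw [show -((j:ℤ)+1) = -(((j+1 : ℕ) : ℤ)) by push_cast; ring, zpow_neg, zpow_natCast, inv_pow]

lemma tpow_pos (j : ℕ) : 0 < (2:ℝ)⁻¹ ^ (j+1) := by positivity

lemma tpow_le_half (j : ℕ) : (2:ℝ)⁻¹ ^ (j+1) ≤ 1/2 := by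
  calc (2:ℝ)⁻¹ ^ (j+1) ≤ (2:ℝ)⁻¹ ^ 1 :=
        pow_le_pow_of_le_one (by norm_num) (by norm_num) (by omega)
    _ = 1/2 := by norm_num

lemma sum_halves (n : ℕ) : ∑ j ∈ Finset.range n, ((2:ℝ)⁻¹)^(j+1) = 1 - (2:ℝ)⁻¹^n := by
  induction n with
  | zero => simp
  | succ n ih => rw [Finset.sum_range_succ, ih]; ring

lemma sum_tpow_le_one (nA : ℕ) : ∑ i : Fin nA, (2:ℝ) ^ (-((i.1 : ℤ) + 1)) ≤ 1 := by
  simp only [tpow_eq]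
  rw [Fin.sum_univ_eq_sum_range (fun j => (2:ℝ)⁻¹ ^ (j+1))]
  rw [sum_halves]
  have : (0:ℝ) ≤ (2:ℝ)⁻¹ ^ nA := by positivity
  linarith

lemma sum_tpow_nonneg (nA : ℕ) : 0 ≤ ∑ i : Fin nA, (2:ℝ) ^ (-((i.1 : ℤ) + 1)) :=
  Finset.sum_nonneg fun i _ => by positivity

lemma actProb_nonneg {nA : ℕ} {p g : ℝ} (hp0 : 0 ≤ p) (hp1 : p ≤ 1) (hg0 : 0 ≤ g)
    (hg1 : g ≤ 1) : ∀ a : Act nA, 0 ≤ actProb nA p g a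
  | some (i, false) => by
      simp only [actProb]
      have := tpow_eq i.1
      have := tpow_pos i.1
      positivity
  | some (i, true) => by
      simp only [actProb]
      have h2 : (0:ℝ) < (2:ℝ) ^ (-((i.1 : ℤ) + 1)) := by positivity
      have : 0 ≤ 1 - p := by linarith
      positivity
  | none => by
      simp only [actProb]
      have h1 : ∑ i : Fin nA, g * (2:ℝ) ^ (-((i.1 : ℤ) + 1))
          = g * ∑ i : Fin nA, (2:ℝ) ^ (-((i.1 : ℤ) + 1)) := by rw [Finset.mul_sum]
      rw [h1]
      have h2 := sum_tpow_le_one nA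
      have h3 := sum_tpow_nonneg nA
      nlinarith

lemma actProb_sum {nA : ℕ} (p g : ℝ) : ∑ a : Act nA, actProb nA p g a = 1 := by
  rw [Fintype.sum_option]
  have : ∀ ib : Fin nA × Bool, actProb nA p g (some ib)
      = (if ib.2 then (1-p) else p) * g * (2:ℝ) ^ (-((ib.1.1 : ℤ) + 1)) := by
    rintro ⟨i, (_|_)⟩ <;> simp [actProb]
  simp only [this]
  rw [Fintype.sum_prod_type]
  have hsum : ∀ i : Fin nA, ∑ b : Bool, (if b then (1-p) else p) * g * (2:ℝ)^(-((i.1:ℤ)+1))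
      = g * (2:ℝ)^(-((i.1:ℤ)+1)) := by
    intro i
    rw [Fintype.sum_bool]
    simp only [if_true, Bool.false_eq_true, if_false]
    ring
  rw [Finset.sum_congr rfl (fun i _ => hsum i)]
  simp only [actProb]
  ring

section RP
variable {V : Type} [Fintype V] [DecidableEq V] {nA : ℕ} {p : ℝ} {γ : V → ℝ}

lemma roundPr_congr {E F : (V → Act nA) → Prop} (h : ∀ f, E f ↔ F f) :
    roundPr nA p γ E = roundPr nA p γ F := by
  unfold roundPr
  exact Finset.sum_congr rfl fun f _ => by
    classical rw [if_congr (h f) rfl rfl]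

variable (hp0 : 0 ≤ p) (hp1 : p ≤ 1) (hγ : ∀ v, 0 ≤ γ v ∧ γ v ≤ 1)

lemma prod_actProb_nonneg (hp0 : 0 ≤ p) (hp1 : p ≤ 1) (hγ : ∀ v, 0 ≤ γ v ∧ γ v ≤ 1)
    (f : V → Act nA) : 0 ≤ ∏ v, actProb nA p (γ v) (f v) :=
  Finset.prod_nonneg fun v _ => actProb_nonneg hp0 hp1 (hγ v).1 (hγ v).2 _

lemma roundPr_nonneg (hp0 : 0 ≤ p) (hp1 : p ≤ 1) (hγ : ∀ v, 0 ≤ γ v ∧ γ v ≤ 1)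
    (E : (V → Act nA) → Prop) : 0 ≤ roundPr nA p γ E := by
  unfold roundPr
  apply Finset.sum_nonneg
  intro f _
  split
  · exact prod_actProb_nonneg hp0 hp1 hγ f
  · exact le_refl _

lemma roundPr_mono (hp0 : 0 ≤ p) (hp1 : p ≤ 1) (hγ : ∀ v, 0 ≤ γ v ∧ γ v ≤ 1)
    {E F : (V → Act nA) → Prop} (h : ∀ f, E f → F f) :
    roundPr nA p γ E ≤ roundPr nA p γ F := by
  unfold roundPr
  apply Finset.sum_le_sum
  intro f _
  classical
  by_cases hE : E f
  · rw [if_pos hE, if_pos (h f hE)]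
  · rw [if_neg hE]
    split
    · exact prod_actProb_nonneg hp0 hp1 hγ f
    · exact le_refl _

lemma roundPr_union_le (hp0 : 0 ≤ p) (hp1 : p ≤ 1) (hγ : ∀ v, 0 ≤ γ v ∧ γ v ≤ 1)
    {ι : Type*} (s : Finset ι) (P : ι → (V → Act nA) → Prop) :
    roundPr nA p γ (fun f => ∃ x ∈ s, P x f) ≤ ∑ x ∈ s, roundPr nA p γ (P x) := by
  unfold roundPr
  rw [Finset.sum_comm]
  apply Finset.sum_le_sum
  intro f _
  classical
  by_cases hE : ∃ x ∈ s, P x f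
  · obtain ⟨x₀, hx₀s, hx₀⟩ := hE
    rw [if_pos ⟨x₀, hx₀s, hx₀⟩]
    have hnn : ∀ x ∈ s, 0 ≤ (if P x f then ∏ v, actProb nA p (γ v) (f v) else 0) := by
      intro x _
      split
      · exact prod_actProb_nonneg hp0 hp1 hγ f
      · exact le_refl _
    have h1 := Finset.single_le_sum hnn hx₀s
    rw [if_pos hx₀] at h1
    exact h1
  · rw [if_neg hE]
    apply Finset.sum_nonneg
    intro x _
    split
    · exact prod_actProb_nonneg hp0 hp1 hγ f
    · exact le_refl _

lemma roundPr_rect (B : V → Finset (Act nA)) :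
    roundPr nA p γ (fun f => ∀ v, f v ∈ B v) = ∏ v, ∑ a ∈ B v, actProb nA p (γ v) a := by
  classical
  have hinner : ∀ v, ∑ a ∈ B v, actProb nA p (γ v) a
      = ∑ a : Act nA, if a ∈ B v then actProb nA p (γ v) a else 0 := by
    intro v
    rw [Finset.sum_ite_mem, Finset.univ_inter]
  simp only [hinner]
  rw [Finset.prod_univ_sum (fun _ => (Finset.univ : Finset (Act nA)))
    (fun v a => if a ∈ B v then actProb nA p (γ v) a else 0), Fintype.piFinset_univ]
  unfold roundPr
  apply Finset.sum_congr rfl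
  intro f _
  by_cases h : ∀ v, f v ∈ B v
  · rw [if_pos h]
    exact Finset.prod_congr rfl fun v _ => by rw [if_pos (h v)]
  · rw [if_neg h]
    push_neg at h
    obtain ⟨v₀, hv₀⟩ := h
    exact Finset.prod_eq_zero (f := fun v => if f v ∈ B v then actProb nA p (γ v) (f v) else 0)
      (Finset.mem_univ v₀) (if_neg hv₀) |>.symm

end RP

section Claims
variable {nA : ℕ} (i j : Fin nA) (hij : j ≠ i) (pl g g' : ℝ)

lemma ap_listen (j : Fin nA) : actProb nA pl g (some (j, false)) = pl * g * (2:ℝ)^(-((j.1:ℤ)+1)) := rfl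
lemma ap_bcast (j : Fin nA) : actProb nA pl g (some (j, true)) = (1-pl) * g * (2:ℝ)^(-((j.1:ℤ)+1)) := rfl

lemma notmem_pair (hij : j ≠ i) (b : Bool) :
    (some (j, b) : Act nA) ∉ ({some (i,false), some (i,true)} : Finset (Act nA)) := by
  simp only [Finset.mem_insert, Finset.mem_singleton, Option.some.injEq, Prod.mk.injEq]
  push_neg
  exact ⟨fun h => absurd h hij, fun h => absurd h hij⟩

lemma Zs_le_one (Aset : Finset (Act nA)) (hpl0 : 0 < pl) (hpl : pl ≤ 1/2) (hg0 : 0 ≤ g)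
    (hg : g ≤ 1/2) : ∑ a ∈ Aset, actProb nA pl g a ≤ 1 := by
  calc ∑ a ∈ Aset, actProb nA pl g a ≤ ∑ a : Act nA, actProb nA pl g a :=
      Finset.sum_le_sum_of_subset_of_nonneg (Finset.subset_univ _)
        (fun a _ _ => actProb_nonneg hpl0.le (by linarith) hg0 (by linarith) a)
    _ = 1 := actProb_sum pl g

lemma Zs_compl_eval : ∑ a ∈ (({some (i,false), some (i,true)} : Finset (Act nA))ᶜ),
    actProb nA pl g a = 1 - g * (2:ℝ)^(-((i.1:ℤ)+1)) := by
  have h1 : ∑ a ∈ (({some (i,false), some (i,true)} : Finset (Act nA))ᶜ), actProb nA pl g a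
      + ∑ a ∈ ({some (i,false), some (i,true)} : Finset (Act nA)), actProb nA pl g a
      = ∑ a : Act nA, actProb nA pl g a := Finset.sum_compl_add_sum _ _
  rw [actProb_sum] at h1
  have h2 : ∑ a ∈ ({some (i,false), some (i,true)} : Finset (Act nA)), actProb nA pl g a
      = g * (2:ℝ)^(-((i.1:ℤ)+1)) := by
    rw [Finset.sum_pair (by simp)]
    rw [ap_listen, ap_bcast]
    ring
  rw [h2] at h1
  linarith

variable (Aset : Finset (Act nA))
  (hcase : (Aset = ({some (i,false), some (i,true)} : Finset (Act nA))ᶜ ∧ g' = g)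
    ∨ (Aset = {some (i,true)} ∧ g' = 0) ∨ (Aset = {some (i,false)} ∧ g' = 0)
    ∨ (Aset = Finset.univ ∧ g' = g))
  (hpl0 : 0 < pl) (hpl : pl ≤ 1/2) (hg0 : 0 ≤ g) (hg : g ≤ 1/2)

include hij hcase hpl0 hpl hg0 hg

lemma claimX : ∑ a ∈ Aset ∩ {some (j, false)}, actProb nA pl g a
    ≤ 2 * pl * g' * (2:ℝ)^(-((j.1:ℤ)+1)) * ∑ a ∈ Aset, actProb nA pl g a := by
  have htj0 : (0:ℝ) < (2:ℝ)^(-((j.1:ℤ)+1)) := by rw [tpow_eq]; exact tpow_pos _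
  have hti : (2:ℝ)^(-((i.1:ℤ)+1)) ≤ 1/2 := by rw [tpow_eq]; exact tpow_le_half _
  have hti0 : (0:ℝ) < (2:ℝ)^(-((i.1:ℤ)+1)) := by rw [tpow_eq]; exact tpow_pos _
  rcases hcase with ⟨hA, hg'⟩ | ⟨hA, hg'⟩ | ⟨hA, hg'⟩ | ⟨hA, hg'⟩ <;> subst hA <;> rw [hg']
  · rw [Finset.inter_singleton_of_mem (Finset.mem_compl.mpr (notmem_pair i j hij false))]
    rw [Finset.sum_singleton, ap_listen, Zs_compl_eval]
    have hgti : g * (2:ℝ)^(-((i.1:ℤ)+1)) ≤ 1/4 := by nlinarith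
    have hq : 0 ≤ pl * g * (2:ℝ)^(-((j.1:ℤ)+1)) := by positivity
    nlinarith [mul_le_mul_of_nonneg_left hgti hq]
  · rw [Finset.singleton_inter_of_notMem (by simp), Finset.sum_empty]
    have h0 : 0 ≤ ∑ a ∈ ({some (i,true)} : Finset (Act nA)), actProb nA pl g a := by
      rw [Finset.sum_singleton, ap_bcast]
      exact mul_nonneg (mul_nonneg (by linarith) hg0) hti0.le
    nlinarith
  · rw [Finset.singleton_inter_of_notMem
        (by simp only [Finset.mem_singleton, Option.some.injEq, Prod.mk.injEq];
            exact fun h => hij h.1.symm), Finset.sum_empty]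
    have h0 : 0 ≤ ∑ a ∈ ({some (i,false)} : Finset (Act nA)), actProb nA pl g a := by
      rw [Finset.sum_singleton, ap_listen]; positivity
    nlinarith
  · rw [Finset.univ_inter, Finset.sum_singleton, ap_listen, actProb_sum]
    nlinarith [mul_nonneg (mul_nonneg hpl0.le hg0) htj0.le]

lemma claimW : ∑ a ∈ Aset ∩ {some (j, true)}, actProb nA pl g a
    ≤ 2 * g' * (2:ℝ)^(-((j.1:ℤ)+1)) * ∑ a ∈ Aset, actProb nA pl g a := by
  have htj0 : (0:ℝ) < (2:ℝ)^(-((j.1:ℤ)+1)) := by rw [tpow_eq]; exact tpow_pos _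
  have hti : (2:ℝ)^(-((i.1:ℤ)+1)) ≤ 1/2 := by rw [tpow_eq]; exact tpow_le_half _
  have hti0 : (0:ℝ) < (2:ℝ)^(-((i.1:ℤ)+1)) := by rw [tpow_eq]; exact tpow_pos _
  rcases hcase with ⟨hA, hg'⟩ | ⟨hA, hg'⟩ | ⟨hA, hg'⟩ | ⟨hA, hg'⟩ <;> subst hA <;> rw [hg']
  · rw [Finset.inter_singleton_of_mem (Finset.mem_compl.mpr (notmem_pair i j hij true))]
    rw [Finset.sum_singleton, ap_bcast, Zs_compl_eval]
    have hgti : g * (2:ℝ)^(-((i.1:ℤ)+1)) ≤ 1/4 := by nlinarith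
    have hq : 0 ≤ g * (2:ℝ)^(-((j.1:ℤ)+1)) := by positivity
    nlinarith [mul_le_mul_of_nonneg_left hgti hq]
  · rw [Finset.singleton_inter_of_notMem
        (by simp only [Finset.mem_singleton, Option.some.injEq, Prod.mk.injEq];
            exact fun h => hij h.1.symm), Finset.sum_empty]
    have h0 : 0 ≤ ∑ a ∈ ({some (i,true)} : Finset (Act nA)), actProb nA pl g a := by
      rw [Finset.sum_singleton, ap_bcast]
      exact mul_nonneg (mul_nonneg (by linarith) hg0) hti0.le
    nlinarith
  · rw [Finset.singleton_inter_of_notMem (by simp), Finset.sum_empty]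
    have h0 : 0 ≤ ∑ a ∈ ({some (i,false)} : Finset (Act nA)), actProb nA pl g a := by
      rw [Finset.sum_singleton, ap_listen]; positivity
    nlinarith
  · rw [Finset.univ_inter, Finset.sum_singleton, ap_bcast, actProb_sum]
    nlinarith [mul_nonneg hg0 htj0.le]

lemma claimN : ∑ a ∈ Aset \ {some (j, true)}, actProb nA pl g a
    ≤ Real.exp (-(g' * ((2:ℝ)^(-((j.1:ℤ)+1)) / 2))) * ∑ a ∈ Aset, actProb nA pl g a := by
  have htj0 : (0:ℝ) < (2:ℝ)^(-((j.1:ℤ)+1)) := by rw [tpow_eq]; exact tpow_pos _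
  have htj : (2:ℝ)^(-((j.1:ℤ)+1)) ≤ 1/2 := by rw [tpow_eq]; exact tpow_le_half _
  have hZ1 := Zs_le_one pl g Aset hpl0 hpl hg0 hg
  have hZ0 : 0 ≤ ∑ a ∈ Aset, actProb nA pl g a :=
    Finset.sum_nonneg fun a _ => actProb_nonneg hpl0.le (by linarith) hg0 (by linarith) a
  have hexp := Real.one_sub_le_exp_neg (g * ((2:ℝ)^(-((j.1:ℤ)+1)) / 2))
  rcases hcase with ⟨hA, hg'⟩ | ⟨hA, hg'⟩ | ⟨hA, hg'⟩ | ⟨hA, hg'⟩ <;> rw [hg']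
  · -- Sn case : bcast j ∈ Aset
    have hmem : (some (j, true) : Act nA) ∈ Aset := by
      rw [hA]; exact Finset.mem_compl.mpr (notmem_pair i j hij true)
    have hsd : ∑ a ∈ Aset \ {some (j, true)}, actProb nA pl g a
        = (∑ a ∈ Aset, actProb nA pl g a) - actProb nA pl g (some (j,true)) := by
      rw [Finset.sum_sdiff_eq_sub (Finset.singleton_subset_iff.mpr hmem), Finset.sum_singleton]
    rw [hsd, ap_bcast]
    have h1 : (1 - g * ((2:ℝ)^(-((j.1:ℤ)+1)) / 2)) * (∑ a ∈ Aset, actProb nA pl g a)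
        ≤ Real.exp (-(g * ((2:ℝ)^(-((j.1:ℤ)+1)) / 2))) * (∑ a ∈ Aset, actProb nA pl g a) :=
      mul_le_mul_of_nonneg_right hexp hZ0
    have h2 : (g * ((2:ℝ)^(-((j.1:ℤ)+1)) / 2)) * (∑ a ∈ Aset, actProb nA pl g a)
        ≤ (g * ((2:ℝ)^(-((j.1:ℤ)+1)) / 2)) * 1 :=
      mul_le_mul_of_nonneg_left hZ1 (by positivity)
    have h3 : (1/2) * (g * (2:ℝ)^(-((j.1:ℤ)+1))) ≤ (1-pl) * (g * (2:ℝ)^(-((j.1:ℤ)+1))) :=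
      mul_le_mul_of_nonneg_right (by linarith) (by positivity)
    nlinarith
  · have hmem : (some (j, true) : Act nA) ∉ Aset := by
      rw [hA]
      simp only [Finset.mem_singleton, Option.some.injEq, Prod.mk.injEq]
      exact fun h => hij h.1
    rw [Finset.sdiff_eq_self_of_disjoint (Finset.disjoint_singleton_right.mpr hmem)]
    simp only [zero_mul, neg_zero, Real.exp_zero, one_mul]
    exact le_refl _
  · have hmem : (some (j, true) : Act nA) ∉ Aset := by rw [hA]; simp
    rw [Finset.sdiff_eq_self_of_disjoint (Finset.disjoint_singleton_right.mpr hmem)]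
    simp only [zero_mul, neg_zero, Real.exp_zero, one_mul]
    exact le_refl _
  · -- univ case
    subst hA
    have hsd : ∑ a ∈ Finset.univ \ {some (j, true)}, actProb nA pl g a
        = (∑ a : Act nA, actProb nA pl g a) - actProb nA pl g (some (j,true)) := by
      rw [Finset.sum_sdiff_eq_sub (Finset.subset_univ _), Finset.sum_singleton]
    rw [hsd, ap_bcast, actProb_sum]
    have h3 : (1/2) * (g * (2:ℝ)^(-((j.1:ℤ)+1))) ≤ (1-pl) * (g * (2:ℝ)^(-((j.1:ℤ)+1))) :=
      mul_le_mul_of_nonneg_right (by linarith) (by positivity)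
    nlinarith [hexp]

end Claims

/-- There is an absolute constant `c > 0` such that in the herald-protocol round model, for
every vertex `u`, every `k ≥ 1`, every channel `i` and every `S ⊆ N^k(u)` partitioned as
`S = Sn ⊔ Sb ⊔ Sl`: conditioned on the event that no vertex of `Sn` operates on channel `i`,
every vertex of `Sb` broadcasts on channel `i`, and every vertex of `Sl` listens on channel
`i` (assuming this event has positive probability), the probability that some vertex of
`N^k(u)` receives a message on some channel `j ≠ i` is at most `c · π_ℓ · α(G[N^k(u)])`. -/
theorem stmt_14 : ∃ c : ℝ, 0 < c ∧
    ∀ (V : Type) [Fintype V] [DecidableEq V] (G : SimpleGraph V) [DecidableRel G.Adj]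
      (nA : ℕ), 1 ≤ nA →
      ∀ pl : ℝ, 0 < pl → pl ≤ 1 / 2 →
      ∀ γ : V → ℝ, (∀ x, 0 ≤ γ x ∧ γ x ≤ 1 / 2) →
      ∀ (u : V) (k : ℕ), 1 ≤ k →
      ∀ (i : Fin nA) (S Sn Sb Sl : Set V), S ⊆ ball G u k →
      Sn ∪ Sb ∪ Sl = S → Disjoint Sn Sb → Disjoint Sn Sl → Disjoint Sb Sl →
      0 < roundPr nA pl γ (fun f => (∀ s ∈ Sn, ¬ operates f s i) ∧
          (∀ s ∈ Sb, broadcasts f s i) ∧ (∀ s ∈ Sl, listens f s i)) →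
      roundPr nA pl γ (fun f => ((∀ s ∈ Sn, ¬ operates f s i) ∧
            (∀ s ∈ Sb, broadcasts f s i) ∧ (∀ s ∈ Sl, listens f s i)) ∧
            ∃ x ∈ ball G u k, ∃ j : Fin nA, j ≠ i ∧ receivesOn G f x j) /
          roundPr nA pl γ (fun f => (∀ s ∈ Sn, ¬ operates f s i) ∧
            (∀ s ∈ Sb, broadcasts f s i) ∧ (∀ s ∈ Sl, listens f s i)) ≤
        c * pl * (indepNumOn G (ball G u k) : ℝ) := by
  classical
  refine ⟨864, by norm_num, ?_⟩
  intro V _ _ G _ nA hnA pl hpl0 hpl2 γ hγ u k hk i S Sn Sb Sl hSball hUnion hnb hnl hbl hpos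
  have hγ01 : ∀ v, 0 ≤ γ v ∧ γ v ≤ 1 := fun v => ⟨(hγ v).1, by linarith [(hγ v).2]⟩
  have hpl1 : pl ≤ 1 := by linarith
  -- the conditioning sets per vertex
  set A : V → Finset (Act nA) := fun v =>
    if v ∈ Sn then ({some (i,false), some (i,true)} : Finset (Act nA))ᶜ
    else if v ∈ Sb then {some (i,true)}
    else if v ∈ Sl then {some (i,false)}
    else Finset.univ with hA_def
  have hASn : ∀ v ∈ Sn, A v = ({some (i,false), some (i,true)} : Finset (Act nA))ᶜ := by
    intro v hv; simp only [hA_def]; rw [if_pos hv]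
  have hASb : ∀ v ∈ Sb, A v = {some (i,true)} := by
    intro v hv
    have h1 : v ∉ Sn := fun h => Set.disjoint_left.mp hnb h hv
    simp only [hA_def]; rw [if_neg h1, if_pos hv]
  have hASl : ∀ v ∈ Sl, A v = {some (i,false)} := by
    intro v hv
    have h1 : v ∉ Sn := fun h => Set.disjoint_left.mp hnl h hv
    have h2 : v ∉ Sb := fun h => Set.disjoint_left.mp hbl h hv
    simp only [hA_def]; rw [if_neg h1, if_neg h2, if_pos hv]
  have hAout : ∀ v, v ∉ Sn → v ∉ Sb → v ∉ Sl → A v = Finset.univ := by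
    intro v h1 h2 h3; simp only [hA_def]; rw [if_neg h1, if_neg h2, if_neg h3]
  set Z : V → ℝ := fun v => ∑ a ∈ A v, actProb nA pl (γ v) a with hZ_def
  set gam' : V → ℝ := fun v => if v ∈ Sb ∪ Sl then 0 else γ v with hg_def
  have hg'0 : ∀ v, 0 ≤ gam' v := by
    intro v; simp only [hg_def]; split
    · exact le_refl 0
    · exact (hγ v).1
  have hg'le : ∀ v, gam' v ≤ 1/2 := by
    intro v; simp only [hg_def]; split
    · norm_num
    · exact (hγ v).2
  have hcaseA : ∀ v,
      (A v = ({some (i,false), some (i,true)} : Finset (Act nA))ᶜ ∧ gam' v = γ v)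
      ∨ (A v = {some (i,true)} ∧ gam' v = 0) ∨ (A v = {some (i,false)} ∧ gam' v = 0)
      ∨ (A v = Finset.univ ∧ gam' v = γ v) := by
    intro v
    by_cases h1 : v ∈ Sn
    · left
      refine ⟨hASn v h1, ?_⟩
      have hnm : v ∉ Sb ∪ Sl := by
        rintro (h | h)
        · exact Set.disjoint_left.mp hnb h1 h
        · exact Set.disjoint_left.mp hnl h1 h
      simp only [hg_def]; rw [if_neg hnm]
    · by_cases h2 : v ∈ Sb
      · right; left
        refine ⟨hASb v h2, ?_⟩
        simp only [hg_def]; rw [if_pos (Set.mem_union_left _ h2)]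
      · by_cases h3 : v ∈ Sl
        · right; right; left
          refine ⟨hASl v h3, ?_⟩
          simp only [hg_def]; rw [if_pos (Set.mem_union_right _ h3)]
        · right; right; right
          refine ⟨hAout v h1 h2 h3, ?_⟩
          have hnm : v ∉ Sb ∪ Sl := by rintro (h | h) <;> [exact h2 h; exact h3 h]
          simp only [hg_def]; rw [if_neg hnm]
  -- conditioning event as a rectangle
  have hCiff : ∀ f : V → Act nA,
      ((∀ s ∈ Sn, ¬ operates f s i) ∧ (∀ s ∈ Sb, broadcasts f s i) ∧
        (∀ s ∈ Sl, listens f s i)) ↔ (∀ v, f v ∈ A v) := by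
    intro f
    constructor
    · rintro ⟨h1, h2, h3⟩ v
      by_cases hv1 : v ∈ Sn
      · rw [hASn v hv1, Finset.mem_compl]
        intro hmem
        rcases Finset.mem_insert.mp hmem with h | h
        · exact h1 v hv1 (Or.inl h)
        · exact h1 v hv1 (Or.inr (Finset.mem_singleton.mp h))
      · by_cases hv2 : v ∈ Sb
        · rw [hASb v hv2]; exact Finset.mem_singleton.mpr (h2 v hv2)
        · by_cases hv3 : v ∈ Sl
          · rw [hASl v hv3]; exact Finset.mem_singleton.mpr (h3 v hv3)
          · rw [hAout v hv1 hv2 hv3]; exact Finset.mem_univ _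
    · intro h
      refine ⟨fun s hs hop => ?_, fun s hs => ?_, fun s hs => ?_⟩
      · have hm := h s
        rw [hASn s hs, Finset.mem_compl] at hm
        apply hm
        rcases hop with hO | hO
        · exact Finset.mem_insert.mpr (Or.inl hO)
        · exact Finset.mem_insert.mpr (Or.inr (Finset.mem_singleton.mpr hO))
      · have hm := h s; rw [hASb s hs] at hm; exact Finset.mem_singleton.mp hm
      · have hm := h s; rw [hASl s hs] at hm; exact Finset.mem_singleton.mp hm
  have hden_eq : roundPr nA pl γ (fun f => (∀ s ∈ Sn, ¬ operates f s i) ∧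
      (∀ s ∈ Sb, broadcasts f s i) ∧ (∀ s ∈ Sl, listens f s i)) = ∏ v, Z v := by
    rw [roundPr_congr hCiff]
    exact roundPr_rect A
  have hdenpos : 0 < ∏ v, Z v := hden_eq ▸ hpos
  have hZnn : ∀ v, 0 ≤ Z v := fun v => Finset.sum_nonneg fun a _ =>
    actProb_nonneg hpl0.le hpl1 (hγ v).1 (hγ01 v).2 a
  have hZpos : ∀ v, 0 < Z v := by
    intro v
    rcases (hZnn v).lt_or_eq with h | h
    · exact h
    · exact absurd (Finset.prod_eq_zero (Finset.mem_univ v) h.symm ▸ hdenpos) (lt_irrefl 0)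
  -- the finite ball
  set ballF : Finset V := (Set.toFinite (ball G u k)).toFinset with hballF_def
  have hmem_ballF : ∀ x, x ∈ ballF ↔ x ∈ ball G u k := fun x => Set.Finite.mem_toFinset _
  -- the per-(x,j,w) rectangles
  set B : V → Fin nA → V → V → Finset (Act nA) := fun x j w v =>
    if v = x then A v ∩ {some (j,false)}
    else if v = w then A v ∩ {some (j,true)}
    else if v ∈ G.neighborFinset x then A v \ {some (j,true)}
    else A v with hB_def
  have hBx : ∀ x j w, B x j w x = A x ∩ {some (j,false)} := by
    intro x j w; simp [hB_def]
  have hBw : ∀ x j w, w ≠ x → B x j w w = A w ∩ {some (j,true)} := by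
    intro x j w h; simp [hB_def, h]
  have hBn : ∀ x j w v, v ≠ x → v ≠ w → v ∈ G.neighborFinset x →
      B x j w v = A v \ {some (j,true)} := by
    intro x j w v h1 h2 h3; simp only [hB_def]; rw [if_neg h1, if_neg h2, if_pos h3]
  have hBo : ∀ x j w v, v ≠ x → v ≠ w → v ∉ G.neighborFinset x → B x j w v = A v := by
    intro x j w v h1 h2 h3; simp only [hB_def]; rw [if_neg h1, if_neg h2, if_neg h3]
  -- union bound over the ball and channels
  set idx : Finset (V × Fin nA) := ballF ×ˢ (Finset.univ.filter (fun j => j ≠ i)) with hidx_def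
  have hnum1 : roundPr nA pl γ (fun f => ((∀ s ∈ Sn, ¬ operates f s i) ∧
        (∀ s ∈ Sb, broadcasts f s i) ∧ (∀ s ∈ Sl, listens f s i)) ∧
        ∃ x ∈ ball G u k, ∃ j : Fin nA, j ≠ i ∧ receivesOn G f x j)
      ≤ ∑ q ∈ idx, roundPr nA pl γ (fun f => (∀ v, f v ∈ A v) ∧ receivesOn G f q.1 q.2) := by
    refine le_trans (roundPr_mono hpl0.le hpl1 hγ01 ?_)
      (roundPr_union_le hpl0.le hpl1 hγ01 idx
        (fun q f => (∀ v, f v ∈ A v) ∧ receivesOn G f q.1 q.2))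
    rintro f ⟨hC, x, hx, j, hji, hrec⟩
    exact ⟨(x, j), Finset.mem_product.mpr ⟨(hmem_ballF x).mpr hx,
      Finset.mem_filter.mpr ⟨Finset.mem_univ _, hji⟩⟩, (hCiff f).mp hC, hrec⟩
  -- per (x, j) : union bound over the broadcasting neighbor
  have hnum2 : ∀ (x : V) (j : Fin nA),
      roundPr nA pl γ (fun f => (∀ v, f v ∈ A v) ∧ receivesOn G f x j)
      ≤ ∑ w ∈ G.neighborFinset x, ∏ v, ∑ a ∈ B x j w v, actProb nA pl (γ v) a := by
    intro x j
    have himp : ∀ f, ((∀ v, f v ∈ A v) ∧ receivesOn G f x j) →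
        ∃ w ∈ G.neighborFinset x, ∀ v, f v ∈ B x j w v := by
      rintro f ⟨hall, hlis, hcard⟩
      obtain ⟨w, hw⟩ := Finset.card_eq_one.mp hcard
      have hwmem : w ∈ (G.neighborFinset x).filter (fun w => broadcasts f w j) := by
        rw [hw]; exact Finset.mem_singleton_self w
      obtain ⟨hwN, hwb⟩ := Finset.mem_filter.mp hwmem
      have hwx : w ≠ x := ((SimpleGraph.mem_neighborFinset _ _ _).mp hwN).ne'
      refine ⟨w, hwN, fun v => ?_⟩
      by_cases hvx : v = x
      · subst hvx
        rw [hBx]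
        exact Finset.mem_inter.mpr ⟨hall v, Finset.mem_singleton.mpr hlis⟩
      · by_cases hvw : v = w
        · subst hvw
          rw [hBw x j v hwx]
          exact Finset.mem_inter.mpr ⟨hall v, Finset.mem_singleton.mpr hwb⟩
        · by_cases hvN : v ∈ G.neighborFinset x
          · rw [hBn x j w v hvx hvw hvN]
            refine Finset.mem_sdiff.mpr ⟨hall v, fun hmem => ?_⟩
            have : v ∈ (G.neighborFinset x).filter (fun w => broadcasts f w j) :=
              Finset.mem_filter.mpr ⟨hvN, Finset.mem_singleton.mp hmem⟩
            rw [hw] at this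
            exact hvw (Finset.mem_singleton.mp this)
          · rw [hBo x j w v hvx hvw hvN]; exact hall v
    calc roundPr nA pl γ (fun f => (∀ v, f v ∈ A v) ∧ receivesOn G f x j)
        ≤ roundPr nA pl γ (fun f => ∃ w ∈ G.neighborFinset x, ∀ v, f v ∈ B x j w v) :=
          roundPr_mono hpl0.le hpl1 hγ01 himp
      _ ≤ ∑ w ∈ G.neighborFinset x, roundPr nA pl γ (fun f => ∀ v, f v ∈ B x j w v) :=
          roundPr_union_le hpl0.le hpl1 hγ01 _ _
      _ = ∑ w ∈ G.neighborFinset x, ∏ v, ∑ a ∈ B x j w v, actProb nA pl (γ v) a :=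
          Finset.sum_congr rfl fun w _ => roundPr_rect _
  -- weighted degree sums
  set sfun : V → ℝ := fun x => ∑ v ∈ G.neighborFinset x, gam' v with hsfun_def
  have hsfun0 : ∀ x, 0 ≤ sfun x := fun x => Finset.sum_nonneg fun v _ => hg'0 v
  -- per (x, j, w) ratio bound
  have hprod : ∀ (x : V) (j : Fin nA), j ≠ i → ∀ w ∈ G.neighborFinset x,
      (∏ v, ∑ a ∈ B x j w v, actProb nA pl (γ v) a) / (∏ v, Z v)
        ≤ 12 * pl * gam' x * gam' w * ((2:ℝ)^(-((j.1:ℤ)+1)))^2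
          * Real.exp (-(sfun x * ((2:ℝ)^(-((j.1:ℤ)+1)) / 2))) := by
    intro x j hji w hwN
    have hadj := (SimpleGraph.mem_neighborFinset _ _ _).mp hwN
    have hwx : w ≠ x := hadj.ne'
    have hxNx : x ∉ G.neighborFinset x := SimpleGraph.notMem_neighborFinset_self _ _
    set tj : ℝ := (2:ℝ)^(-((j.1:ℤ)+1)) with htj_def
    have htj0 : 0 < tj := by rw [htj_def, tpow_eq]; exact tpow_pos _
    have htj : tj ≤ 1/2 := by rw [htj_def, tpow_eq]; exact tpow_le_half _
    have hmBnn : ∀ v, 0 ≤ ∑ a ∈ B x j w v, actProb nA pl (γ v) a := fun v =>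
      Finset.sum_nonneg fun a _ => actProb_nonneg hpl0.le hpl1 (hγ v).1 (hγ01 v).2 a
    rw [← Finset.prod_div_distrib]
    have houtside : ∀ v ∈ Finset.univ, v ∉ insert x (G.neighborFinset x) →
        (∑ a ∈ B x j w v, actProb nA pl (γ v) a) / Z v = 1 := by
      intro v _ hv
      have h1 : v ≠ x := fun h => hv (h ▸ Finset.mem_insert_self _ _)
      have h3 : v ∉ G.neighborFinset x := fun h => hv (Finset.mem_insert.mpr (Or.inr h))
      have h2 : v ≠ w := fun h => h3 (h ▸ hwN)
      rw [hBo x j w v h1 h2 h3]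
      exact div_self (hZpos v).ne'
    rw [← Finset.prod_subset (Finset.subset_univ (insert x (G.neighborFinset x))) houtside]
    rw [Finset.prod_insert hxNx]
    rw [Finset.prod_eq_mul_prod_sdiff_singleton_of_mem hwN
      (fun v => (∑ a ∈ B x j w v, actProb nA pl (γ v) a) / Z v)]
    have hX : (∑ a ∈ B x j w x, actProb nA pl (γ x) a) / Z x ≤ 2 * pl * gam' x * tj := by
      rw [hBx, div_le_iff₀ (hZpos x)]
      exact claimX i j hji pl (γ x) (gam' x) (A x) (hcaseA x) hpl0 hpl2 (hγ x).1 (hγ x).2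
    have hW : (∑ a ∈ B x j w w, actProb nA pl (γ w) a) / Z w ≤ 2 * gam' w * tj := by
      rw [hBw x j w hwx, div_le_iff₀ (hZpos w)]
      exact claimW i j hji pl (γ w) (gam' w) (A w) (hcaseA w) hpl0 hpl2 (hγ w).1 (hγ w).2
    have hNb : ∀ v ∈ G.neighborFinset x \ {w},
        (∑ a ∈ B x j w v, actProb nA pl (γ v) a) / Z v
          ≤ Real.exp (-(gam' v * (tj / 2))) := by
      intro v hv
      obtain ⟨hvN, hvw'⟩ := Finset.mem_sdiff.mp hv
      have hvw : v ≠ w := fun h => hvw' (Finset.mem_singleton.mpr h)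
      have hvx : v ≠ x := fun h => hxNx (h ▸ hvN)
      rw [hBn x j w v hvx hvw hvN, div_le_iff₀ (hZpos v)]
      exact claimN i j hji pl (γ v) (gam' v) (A v) (hcaseA v) hpl0 hpl2 (hγ v).1 (hγ v).2
    have hP2nn : 0 ≤ (∑ a ∈ B x j w w, actProb nA pl (γ w) a) / Z w :=
      div_nonneg (hmBnn w) (hZpos w).le
    have hP3nn : 0 ≤ ∏ v ∈ G.neighborFinset x \ {w},
        (∑ a ∈ B x j w v, actProb nA pl (γ v) a) / Z v :=
      Finset.prod_nonneg fun v _ => div_nonneg (hmBnn v) (hZpos v).le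
    have hQ1nn : 0 ≤ 2 * pl * gam' x * tj :=
      mul_nonneg (mul_nonneg (by positivity) (hg'0 x)) htj0.le
    have hQ2nn : 0 ≤ 2 * gam' w * tj :=
      mul_nonneg (mul_nonneg (by norm_num) (hg'0 w)) htj0.le
    have hP3 : ∏ v ∈ G.neighborFinset x \ {w},
        (∑ a ∈ B x j w v, actProb nA pl (γ v) a) / Z v
        ≤ ∏ v ∈ G.neighborFinset x \ {w}, Real.exp (-(gam' v * (tj / 2))) :=
      Finset.prod_le_prod (fun v _ => div_nonneg (hmBnn v) (hZpos v).le) hNb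
    have hprodexp : ∏ v ∈ G.neighborFinset x \ {w}, Real.exp (-(gam' v * (tj / 2)))
        = Real.exp (-((sfun x - gam' w) * (tj / 2))) := by
      rw [← Real.exp_sum]
      congr 1
      rw [Finset.sum_neg_distrib, ← Finset.sum_mul]
      congr 2
      rw [Finset.sum_sdiff_eq_sub (Finset.singleton_subset_iff.mpr hwN),
        Finset.sum_singleton, hsfun_def]
    have hexp3 : Real.exp (gam' w * (tj / 2)) ≤ 3 := by
      have harg : gam' w * (tj / 2) ≤ 1 := by nlinarith [hg'le w, htj, hg'0 w, htj0]
      calc Real.exp (gam' w * (tj / 2)) ≤ Real.exp 1 := Real.exp_le_exp.mpr harg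
        _ ≤ 3 := by linarith [Real.exp_one_lt_d9]
    have hexpnn : (0:ℝ) ≤ Real.exp (-(sfun x * (tj / 2))) := (Real.exp_pos _).le
    calc (∑ a ∈ B x j w x, actProb nA pl (γ x) a) / Z x
          * ((∑ a ∈ B x j w w, actProb nA pl (γ w) a) / Z w
            * ∏ v ∈ G.neighborFinset x \ {w},
                (∑ a ∈ B x j w v, actProb nA pl (γ v) a) / Z v)
        ≤ (2 * pl * gam' x * tj) * ((∑ a ∈ B x j w w, actProb nA pl (γ w) a) / Z w
            * ∏ v ∈ G.neighborFinset x \ {w},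
                (∑ a ∈ B x j w v, actProb nA pl (γ v) a) / Z v) :=
          mul_le_mul_of_nonneg_right hX (mul_nonneg hP2nn hP3nn)
      _ ≤ (2 * pl * gam' x * tj) * ((2 * gam' w * tj)
            * ∏ v ∈ G.neighborFinset x \ {w},
                (∑ a ∈ B x j w v, actProb nA pl (γ v) a) / Z v) :=
          mul_le_mul_of_nonneg_left (mul_le_mul_of_nonneg_right hW hP3nn) hQ1nn
      _ ≤ (2 * pl * gam' x * tj) * ((2 * gam' w * tj)
            * ∏ v ∈ G.neighborFinset x \ {w}, Real.exp (-(gam' v * (tj / 2)))) :=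
          mul_le_mul_of_nonneg_left (mul_le_mul_of_nonneg_left hP3 hQ2nn) hQ1nn
      _ = (4 * pl * gam' x * gam' w * tj^2 * Real.exp (-(sfun x * (tj / 2))))
            * Real.exp (gam' w * (tj / 2)) := by
          rw [hprodexp, show -((sfun x - gam' w) * (tj / 2))
            = -(sfun x * (tj / 2)) + gam' w * (tj / 2) by ring, Real.exp_add]
          ring
      _ ≤ (4 * pl * gam' x * gam' w * tj^2 * Real.exp (-(sfun x * (tj / 2)))) * 3 := by
          apply mul_le_mul_of_nonneg_left hexp3
          have h4 : (0:ℝ) ≤ 4 * pl * gam' x * gam' w :=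
            mul_nonneg (mul_nonneg (by positivity) (hg'0 x)) (hg'0 w)
          exact mul_nonneg (mul_nonneg h4 (sq_nonneg tj)) hexpnn
      _ = 12 * pl * gam' x * gam' w * tj^2 * Real.exp (-(sfun x * (tj / 2))) := by ring
  -- sum over the broadcasting neighbor
  have hxj : ∀ (x : V) (j : Fin nA), j ≠ i →
      ∑ w ∈ G.neighborFinset x,
          (∏ v, ∑ a ∈ B x j w v, actProb nA pl (γ v) a) / (∏ v, Z v)
        ≤ 12 * pl * gam' x * (((2:ℝ)^(-((j.1:ℤ)+1)))^2 * sfun x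
            * Real.exp (-(sfun x * ((2:ℝ)^(-((j.1:ℤ)+1)) / 2)))) := by
    intro x j hji
    calc ∑ w ∈ G.neighborFinset x,
            (∏ v, ∑ a ∈ B x j w v, actProb nA pl (γ v) a) / (∏ v, Z v)
        ≤ ∑ w ∈ G.neighborFinset x, 12 * pl * gam' x * gam' w * ((2:ℝ)^(-((j.1:ℤ)+1)))^2
            * Real.exp (-(sfun x * ((2:ℝ)^(-((j.1:ℤ)+1)) / 2))) :=
          Finset.sum_le_sum (fun w hw => hprod x j hji w hw)
      _ = ∑ w ∈ G.neighborFinset x, (12 * pl * gam' x * (((2:ℝ)^(-((j.1:ℤ)+1)))^2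
            * Real.exp (-(sfun x * ((2:ℝ)^(-((j.1:ℤ)+1)) / 2))))) * gam' w :=
          Finset.sum_congr rfl (fun w _ => by ring)
      _ = _ := by
          rw [← Finset.mul_sum]
          simp only [hsfun_def]
          ring
  -- sum over channels
  have hx : ∀ x : V,
      ∑ j ∈ Finset.univ.filter (fun j => j ≠ i), ∑ w ∈ G.neighborFinset x,
          (∏ v, ∑ a ∈ B x j w v, actProb nA pl (γ v) a) / (∏ v, Z v)
        ≤ 864 * pl * (gam' x / (1 + sfun x)) := by
    intro x
    have hbnd_nn : ∀ j : Fin nA, 0 ≤ 12 * pl * gam' x * (((2:ℝ)^(-((j.1:ℤ)+1)))^2 * sfun x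
        * Real.exp (-(sfun x * ((2:ℝ)^(-((j.1:ℤ)+1)) / 2)))) := by
      intro j
      have h1 : 0 ≤ 12 * pl * gam' x := mul_nonneg (by positivity) (hg'0 x)
      have h2 : 0 ≤ ((2:ℝ)^(-((j.1:ℤ)+1)))^2 * sfun x
          * Real.exp (-(sfun x * ((2:ℝ)^(-((j.1:ℤ)+1)) / 2))) :=
        mul_nonneg (mul_nonneg (sq_nonneg _) (hsfun0 x)) (Real.exp_pos _).le
      exact mul_nonneg h1 h2
    have hgeo : ∑ j : Fin nA, ((2:ℝ)^(-((j.1:ℤ)+1)))^2 * sfun x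
        * Real.exp (-(sfun x * ((2:ℝ)^(-((j.1:ℤ)+1)) / 2))) ≤ 72 / (1 + sfun x) := by
      have heq : ∀ j : Fin nA, ((2:ℝ)^(-((j.1:ℤ)+1)))^2 * sfun x
          * Real.exp (-(sfun x * ((2:ℝ)^(-((j.1:ℤ)+1)) / 2)))
          = ((2:ℝ)⁻¹^(j.1+1))^2 * sfun x * Real.exp (-(sfun x * (2:ℝ)⁻¹^(j.1+2))) := by
        intro j
        rw [tpow_eq]
        rw [show (2:ℝ)⁻¹^(j.1+2) = (2:ℝ)⁻¹^(j.1+1)/2 by rw [pow_succ]; ring]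
      rw [Finset.sum_congr rfl (fun j _ => heq j)]
      rw [Fin.sum_univ_eq_sum_range
        (fun m => ((2:ℝ)⁻¹^(m+1))^2 * sfun x * Real.exp (-(sfun x * (2:ℝ)⁻¹^(m+2))))]
      exact geo2 nA (sfun x) (hsfun0 x)
    calc ∑ j ∈ Finset.univ.filter (fun j => j ≠ i), ∑ w ∈ G.neighborFinset x,
            (∏ v, ∑ a ∈ B x j w v, actProb nA pl (γ v) a) / (∏ v, Z v)
        ≤ ∑ j ∈ Finset.univ.filter (fun j => j ≠ i),
            12 * pl * gam' x * (((2:ℝ)^(-((j.1:ℤ)+1)))^2 * sfun x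
              * Real.exp (-(sfun x * ((2:ℝ)^(-((j.1:ℤ)+1)) / 2)))) :=
          Finset.sum_le_sum (fun j hj => hxj x j (Finset.mem_filter.mp hj).2)
      _ ≤ ∑ j : Fin nA, 12 * pl * gam' x * (((2:ℝ)^(-((j.1:ℤ)+1)))^2 * sfun x
              * Real.exp (-(sfun x * ((2:ℝ)^(-((j.1:ℤ)+1)) / 2)))) :=
          Finset.sum_le_sum_of_subset_of_nonneg (Finset.filter_subset _ _)
            (fun j _ _ => hbnd_nn j)
      _ = 12 * pl * gam' x * ∑ j : Fin nA, ((2:ℝ)^(-((j.1:ℤ)+1)))^2 * sfun x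
              * Real.exp (-(sfun x * ((2:ℝ)^(-((j.1:ℤ)+1)) / 2))) := by
          rw [Finset.mul_sum]
      _ ≤ 12 * pl * gam' x * (72 / (1 + sfun x)) := by
          apply mul_le_mul_of_nonneg_left hgeo
          exact mul_nonneg (by positivity) (hg'0 x)
      _ = 864 * pl * (gam' x / (1 + sfun x)) := by ring
  -- comparison with the Caro-Wei denominator
  have hCW : ∀ x : V, 864 * pl * (gam' x / (1 + sfun x))
      ≤ 864 * pl * (gam' x / (gam' x + ∑ y ∈ G.neighborFinset x ∩ ballF, gam' y)) := by
    intro x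
    apply mul_le_mul_of_nonneg_left _ (by positivity : (0:ℝ) ≤ 864 * pl)
    rcases eq_or_lt_of_le (hg'0 x) with h0 | h0
    · rw [← h0, zero_div, zero_div]
    · have hd2 : 0 < gam' x + ∑ y ∈ G.neighborFinset x ∩ ballF, gam' y := by
        have : 0 ≤ ∑ y ∈ G.neighborFinset x ∩ ballF, gam' y :=
          Finset.sum_nonneg (fun y _ => hg'0 y)
        linarith
      have hle : gam' x + ∑ y ∈ G.neighborFinset x ∩ ballF, gam' y ≤ 1 + sfun x := by
        have h1 : gam' x ≤ 1 := le_trans (hg'le x) (by norm_num)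
        have h2 : ∑ y ∈ G.neighborFinset x ∩ ballF, gam' y ≤ sfun x := by
          simp only [hsfun_def]
          exact Finset.sum_le_sum_of_subset_of_nonneg (Finset.inter_subset_left)
            (fun y _ _ => hg'0 y)
        linarith
      exact div_le_div_of_nonneg_left (hg'0 x) hd2 hle
  -- Caro-Wei bound
  obtain ⟨sIdp, hsub, hind, hsumCW⟩ := caroWei G gam' hg'0 ballF.card ballF (le_refl _)
  have hαle : (sIdp.card : ℝ) ≤ (indepNumOn G (ball G u k) : ℝ) := by
    have hmemset : sIdp.card ∈ {n | ∃ s : Finset V, ↑s ⊆ ball G u k ∧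
        (∀ a ∈ s, ∀ b ∈ s, a ≠ b → ¬ G.Adj a b) ∧ s.card = n} :=
      ⟨sIdp, fun a ha => (hmem_ballF a).mp (hsub ha), hind, rfl⟩
    have hbdd : BddAbove {n | ∃ s : Finset V, ↑s ⊆ ball G u k ∧
        (∀ a ∈ s, ∀ b ∈ s, a ≠ b → ¬ G.Adj a b) ∧ s.card = n} := by
      refine ⟨Fintype.card V, fun n hn => ?_⟩
      obtain ⟨t, _, _, hc⟩ := hn
      rw [← hc, ← Finset.card_univ]
      exact Finset.card_le_univ t
    have := le_csSup hbdd hmemset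
    exact_mod_cast this
  -- final assembly
  have hNB : roundPr nA pl γ (fun f => ((∀ s ∈ Sn, ¬ operates f s i) ∧
        (∀ s ∈ Sb, broadcasts f s i) ∧ (∀ s ∈ Sl, listens f s i)) ∧
        ∃ x ∈ ball G u k, ∃ j : Fin nA, j ≠ i ∧ receivesOn G f x j)
      ≤ ∑ q ∈ idx, ∑ w ∈ G.neighborFinset q.1,
          ∏ v, ∑ a ∈ B q.1 q.2 w v, actProb nA pl (γ v) a :=
    le_trans hnum1 (Finset.sum_le_sum (fun q _ => hnum2 q.1 q.2))
  rw [hden_eq]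
  calc roundPr nA pl γ (fun f => ((∀ s ∈ Sn, ¬ operates f s i) ∧
          (∀ s ∈ Sb, broadcasts f s i) ∧ (∀ s ∈ Sl, listens f s i)) ∧
          ∃ x ∈ ball G u k, ∃ j : Fin nA, j ≠ i ∧ receivesOn G f x j) / (∏ v, Z v)
      ≤ (∑ q ∈ idx, ∑ w ∈ G.neighborFinset q.1,
          ∏ v, ∑ a ∈ B q.1 q.2 w v, actProb nA pl (γ v) a) / (∏ v, Z v) :=
        div_le_div_of_nonneg_right hNB hdenpos.le
    _ = ∑ x ∈ ballF, ∑ j ∈ Finset.univ.filter (fun j => j ≠ i), ∑ w ∈ G.neighborFinset x,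
          (∏ v, ∑ a ∈ B x j w v, actProb nA pl (γ v) a) / (∏ v, Z v) := by
        rw [hidx_def, Finset.sum_product]
        simp only [Finset.sum_div]
    _ ≤ ∑ x ∈ ballF, 864 * pl * (gam' x / (gam' x + ∑ y ∈ G.neighborFinset x ∩ ballF, gam' y)) :=
        Finset.sum_le_sum (fun x _ => le_trans (hx x) (hCW x))
    _ = 864 * pl * ∑ x ∈ ballF, gam' x / (gam' x + ∑ y ∈ G.neighborFinset x ∩ ballF, gam' y) := by
        rw [Finset.mul_sum]
    _ ≤ 864 * pl * (indepNumOn G (ball G u k) : ℝ) := by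
        apply mul_le_mul_of_nonneg_left (le_trans hsumCW hαle) (by positivity)
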